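/- The function u(t,x) = [(a₀ + a₁e^{α(x+vt)})/(b₀ + b₁e^{α(x+vt)})]² satisfies τ·u_tt + B·u_t − κ·u_xx = λ₀ + λ_{1/2}·√u + λ₁·u + λ_{3/2}·u^{3/2} + λ₂·u², where h = α(v²τ−κ), Δ = a₁b₀−a₀b₁ ≠ 0, Θ = a₁b₀+a₀b₁, and λ₀ = 2a₀²a₁²αh/Δ², λ_{1/2} = −2a₀a₁α(3hΘ + BvΔ)/Δ², λ₁ = 2α(h(3Θ² − Δ²) + BvΔΘ)/Δ², λ_{3/2} = −2b₀b₁α(5hΘ + BvΔ)/Δ², λ₂ = 6b₀²b₁²hα/Δ², provided the quotient (a₀ + a₁e^{α(x+vt)})/(b₀ + b₁e^{α(x+vt)}) is nonnegative and b₀ + b₁e^{α(x+vt)} ≠ 0 on the region considered. -/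

import Mathlib

noncomputable def pdt (u : ℝ → ℝ → ℝ) (t x : ℝ) : ℝ := deriv (fun s => u s x) t
noncomputable def pdx (u : ℝ → ℝ → ℝ) (t x : ℝ) : ℝ := deriv (fun y => u t y) x
noncomputable def pdtt (u : ℝ → ℝ → ℝ) (t x : ℝ) : ℝ := deriv (fun s => pdt u s x) t
noncomputable def pdxx (u : ℝ → ℝ → ℝ) (t x : ℝ) : ℝ := deriv (fun y => pdx u t y) x

/-!
With `z = x + v t`, `u` is the traveling wave `q(z)²`, where the ratio
`q(z) = (a₀ + a₁ e^{αz}) / (b₀ + b₁ e^{αz})` solves the Riccati equation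
`Δ q' = α (a₁ - b₁ q)(b₀ q - a₀) = α (-a₀a₁ + Θ q - b₀b₁ q²)`.
Hence `τ u_tt + B u_t - κ u_xx = (v²τ - κ) (q²)'' + B v (q²)'`, and differentiating `q²`
twice through the Riccati equation turns this into a quartic polynomial in `q = √u`,
whose coefficients are the `λ`'s.
-/

open Topology Real

section TravelingWave

variable (g : ℝ → ℝ) (v t x : ℝ)

lemma deriv_comp_const_add_mul :
    deriv (fun s => g (x + v * s)) t = v * deriv g (x + v * t) := by
  have h := deriv_comp_mul_left v (fun y => g (x + y)) t
  rwa [deriv_comp_const_add, smul_eq_mul] at h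

lemma pdt_travelingWave : pdt (fun t x => g (x + v * t)) t x = v * deriv g (x + v * t) :=
  deriv_comp_const_add_mul g v t x

lemma pdtt_travelingWave :
    pdtt (fun t x => g (x + v * t)) t x = v ^ 2 * deriv (deriv g) (x + v * t) := by
  simp only [pdtt, pdt_travelingWave]
  rw [deriv_const_mul_field, deriv_comp_const_add_mul]
  ring

lemma pdxx_travelingWave :
    pdxx (fun t x => g (x + v * t)) t x = deriv (deriv g) (x + v * t) := by
  simp only [pdxx, pdx]
  simp_rw [deriv_comp_add_const]

end TravelingWave

section AutonomousODE

variable {q F : ℝ → ℝ} {z F' : ℝ}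

lemma deriv_sq_of_hasDerivAt (hq : HasDerivAt q (F (q z)) z) :
    deriv (fun y => q y ^ 2) z = 2 * q z * F (q z) := by
  rw [(hq.fun_pow 2).deriv]
  ring

lemma deriv_deriv_sq_of_eventually_hasDerivAt (hq : ∀ᶠ y in 𝓝 z, HasDerivAt q (F (q y)) y)
    (hF : HasDerivAt F F' (q z)) :
    deriv (deriv fun y => q y ^ 2) z = 2 * F (q z) ^ 2 + 2 * q z * F' * F (q z) := by
  have hfirst : deriv (fun y => q y ^ 2) =ᶠ[𝓝 z] fun y => 2 * q y * F (q y) :=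
    hq.mono fun y hy => deriv_sq_of_hasDerivAt hy
  have hq₀ : HasDerivAt q (F (q z)) z := hq.self_of_nhds
  have hsecond : HasDerivAt (fun y => 2 * q y * F (q y))
      (2 * F (q z) * F (q z) + 2 * q z * (F' * F (q z))) z :=
    (hq₀.const_mul 2).fun_mul (hF.comp z hq₀)
  rw [hfirst.deriv_eq, hsecond.deriv]
  ring

end AutonomousODE

section ExpRatio

variable (a0 a1 b0 b1 α : ℝ)

noncomputable def expRatio (z : ℝ) : ℝ := (a0 + a1 * exp (α * z)) / (b0 + b1 * exp (α * z))

noncomputable def expRatioRiccati (w : ℝ) : ℝ :=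
  α * (a1 - b1 * w) * (b0 * w - a0) / (a1 * b0 - a0 * b1)

variable {a0 a1 b0 b1 α}

lemma hasDerivAt_expRatio {z : ℝ} (hD : b0 + b1 * exp (α * z) ≠ 0) :
    HasDerivAt (expRatio a0 a1 b0 b1 α)
      (expRatioRiccati a0 a1 b0 b1 α (expRatio a0 a1 b0 b1 α z)) z := by
  have hE : HasDerivAt (fun y => exp (α * y)) (exp (α * z) * α) z := by
    simpa using ((hasDerivAt_id z).const_mul α).exp
  have hleft : a1 - b1 * expRatio a0 a1 b0 b1 α z
      = (a1 * b0 - a0 * b1) / (b0 + b1 * exp (α * z)) := by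
    rw [expRatio, eq_div_iff hD, sub_mul, mul_assoc b1, div_mul_cancel₀ _ hD]
    ring
  have hright : b0 * expRatio a0 a1 b0 b1 α z - a0
      = (a1 * b0 - a0 * b1) * exp (α * z) / (b0 + b1 * exp (α * z)) := by
    rw [expRatio, eq_div_iff hD, sub_mul, mul_assoc b0, div_mul_cancel₀ _ hD]
    ring
  refine (((hE.const_mul a1).const_add a0).div
    ((hE.const_mul b1).const_add b0) hD).congr_deriv ?_
  rw [expRatioRiccati, hleft, hright]
  field_simp
  ring

lemma eventually_hasDerivAt_expRatio {z : ℝ} (hD : b0 + b1 * exp (α * z) ≠ 0) :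
    ∀ᶠ y in 𝓝 z, HasDerivAt (expRatio a0 a1 b0 b1 α)
      (expRatioRiccati a0 a1 b0 b1 α (expRatio a0 a1 b0 b1 α y)) y := by
  have hcont : Continuous fun y => b0 + b1 * exp (α * y) := by fun_prop
  exact (hcont.continuousAt.eventually_ne hD).mono fun y hy => hasDerivAt_expRatio hy

lemma hasDerivAt_expRatioRiccati (w : ℝ) :
    HasDerivAt (expRatioRiccati a0 a1 b0 b1 α)
      (α * (a1 * b0 + a0 * b1 - 2 * b0 * b1 * w) / (a1 * b0 - a0 * b1)) w := by
  refine (((((hasDerivAt_id' w).const_mul b1).const_sub a1).const_mul α).fun_mul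
    (((hasDerivAt_id' w).const_mul b0).sub_const a0)
    |>.div_const (a1 * b0 - a0 * b1)).congr_deriv ?_
  ring

end ExpRatio

theorem stmt_3_general (τ B κ v a0 a1 b0 b1 α : ℝ)
    (Δ Θ h lam0 lamhalf lam1 lam3half lam2 : ℝ)
    (hΔ : Δ = a1 * b0 - a0 * b1)
    (hΘ : Θ = a1 * b0 + a0 * b1)
    (hh : h = α * (v ^ 2 * τ - κ))
    (hlam0 : lam0 = 2 * a0 ^ 2 * a1 ^ 2 * α * h / Δ ^ 2)
    (hlamhalf : lamhalf = -2 * a0 * a1 * α * (3 * h * Θ + B * v * Δ) / Δ ^ 2)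
    (hlam1 : lam1 = 2 * α * (h * (3 * Θ ^ 2 - Δ ^ 2) + B * v * Δ * Θ) / Δ ^ 2)
    (hlam3half : lam3half = -2 * b0 * b1 * α * (5 * h * Θ + B * v * Δ) / Δ ^ 2)
    (hlam2 : lam2 = 6 * b0 ^ 2 * b1 ^ 2 * h * α / Δ ^ 2)
    (u : ℝ → ℝ → ℝ)
    (hu : ∀ t x, u t x =
      ((a0 + a1 * Real.exp (α * (x + v * t))) / (b0 + b1 * Real.exp (α * (x + v * t)))) ^ 2) :
    ∀ t x, b0 + b1 * Real.exp (α * (x + v * t)) ≠ 0 →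
      0 ≤ (a0 + a1 * Real.exp (α * (x + v * t))) / (b0 + b1 * Real.exp (α * (x + v * t))) →
      τ * pdtt u t x + B * pdt u t x - κ * pdxx u t x =
        lam0 + lamhalf * Real.sqrt (u t x) + lam1 * u t x
          + lam3half * u t x * Real.sqrt (u t x) + lam2 * u t x ^ 2 := by
  intro t x hD hq₀
  set q := expRatio a0 a1 b0 b1 α
  have hwave : u = fun t x => (fun z => q z ^ 2) (x + v * t) :=
    funext fun t => funext fun x => hu t x
  have hq : ∀ᶠ y in 𝓝 (x + v * t), HasDerivAt q (expRatioRiccati a0 a1 b0 b1 α (q y)) y :=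
    eventually_hasDerivAt_expRatio hD
  have hsqrt : √(u t x) = q (x + v * t) := by
    rw [hu, Real.sqrt_sq hq₀]
    rfl
  have hsq : u t x = q (x + v * t) ^ 2 := hu t x
  rw [hsqrt, hsq, hwave, pdtt_travelingWave (fun z => q z ^ 2),
    pdt_travelingWave (fun z => q z ^ 2), pdxx_travelingWave (fun z => q z ^ 2),
    deriv_sq_of_hasDerivAt hq.self_of_nhds,
    deriv_deriv_sq_of_eventually_hasDerivAt hq (hasDerivAt_expRatioRiccati _)]
  simp only [expRatioRiccati]
  subst hΔ hΘ hh hlam0 hlamhalf hlam1 hlam3half hlam2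
  field_simp
  ring

theorem stmt_3 (τ B κ v a0 a1 b0 b1 α : ℝ)
    (Δ Θ h lam0 lamhalf lam1 lam3half lam2 : ℝ)
    (hΔ : Δ = a1 * b0 - a0 * b1) (hΔne : Δ ≠ 0)
    (hΘ : Θ = a1 * b0 + a0 * b1)
    (hh : h = α * (v ^ 2 * τ - κ))
    (hlam0 : lam0 = 2 * a0 ^ 2 * a1 ^ 2 * α * h / Δ ^ 2)
    (hlamhalf : lamhalf = -2 * a0 * a1 * α * (3 * h * Θ + B * v * Δ) / Δ ^ 2)
    (hlam1 : lam1 = 2 * α * (h * (3 * Θ ^ 2 - Δ ^ 2) + B * v * Δ * Θ) / Δ ^ 2)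
    (hlam3half : lam3half = -2 * b0 * b1 * α * (5 * h * Θ + B * v * Δ) / Δ ^ 2)
    (hlam2 : lam2 = 6 * b0 ^ 2 * b1 ^ 2 * h * α / Δ ^ 2)
    (u : ℝ → ℝ → ℝ)
    (hu : ∀ t x, u t x =
      ((a0 + a1 * Real.exp (α * (x + v * t))) / (b0 + b1 * Real.exp (α * (x + v * t)))) ^ 2) :
    ∀ t x, b0 + b1 * Real.exp (α * (x + v * t)) ≠ 0 →
      0 ≤ (a0 + a1 * Real.exp (α * (x + v * t))) / (b0 + b1 * Real.exp (α * (x + v * t))) →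
      τ * pdtt u t x + B * pdt u t x - κ * pdxx u t x =
        lam0 + lamhalf * Real.sqrt (u t x) + lam1 * u t x
          + lam3half * u t x * Real.sqrt (u t x) + lam2 * u t x ^ 2 :=
  stmt_3_general τ B κ v a0 a1 b0 b1 α Δ Θ h lam0 lamhalf lam1 lam3half lam2 hΔ hΘ hh hlam0 hlamhalf
    hlam1 hlam3half hlam2 u hu
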